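/- Let p > 3 be a prime and let a, b ∈ ℚ_p be nonzero with |a|_p = |b|_p = 1, |−4a³ − 27b²|_p = 1, and u_{p−2} ≡ 0 (mod p), where a_0, b_0 are the first digits of a and b and (u_n) is the integer sequence defined by u_1 = 0, u_2 = −a_0, u_3 = b_0, and u_{n+3} = b_0·u_n − a_0·u_{n+1}. Then the equation x³ + ax = b has exactly 3 solutions x in ℤ_p^*, i.e. the set {x ∈ ℚ_p : |x|_p = 1 and x³ + ax = b} has exactly 3 elements. -/

import Mathlib

/-- `x0` is the first digit of the nonzero `p`-adic number `x`: the unique integer in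
`{1, …, p-1}` congruent modulo `p` to the unit part `x* = x·|x|_p = x·p^{-v_p(x)}`. -/
def isFirstDigit (p : ℕ) [Fact p.Prime] (x : ℚ_[p]) (x0 : ℤ) : Prop :=
  1 ≤ x0 ∧ x0 ≤ (p : ℤ) - 1 ∧ ‖x * (p : ℚ_[p]) ^ (-x.valuation) - (x0 : ℚ_[p])‖ < 1

/-- The sequence `u_1 = 0`, `u_2 = -a0`, `u_3 = b0`, `u_{n+3} = b0·u_n - a0·u_{n+1}`. -/
def useq (a0 b0 : ℤ) : ℕ → ℤ
  | 0 => 0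
  | 1 => 0
  | 2 => -a0
  | 3 => b0
  | n + 4 => b0 * useq a0 b0 (n + 1) - a0 * useq a0 b0 (n + 2)

/-!
Let `f̄ = X³ + a₀X - b₀` over `𝔽_p`. The recurrence defining `u` is the one satisfied by the
`X²`-coefficients of `Xⁿ mod f̄`, and `u_{p-2}` is that coefficient for `Xᵖ`, so the hypothesis
says `Xᵖ ≡ c₁X + c₀ (mod f̄)`. As `f̄(Xᵖ) = f̄ᵖ`, `f̄` divides `f̄(c₁X + c₀)`; comparing
coefficients (with `a₀, b₀, 3 ≠ 0`) forces `c₁ = 1, c₀ = 0`, while `c₁ = 0` would make `f̄` the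
cube `(X - c₀)³`. Hence `f̄ ∣ Xᵖ - X`: it has three distinct simple roots, all nonzero, and
Hensel's lemma lifts them to three unit roots of `X³ + aX - b`, which has no others.
-/

open Polynomial

section DepressedCubic

variable {R : Type*} [CommRing R]

noncomputable def depressedCubic (α β : R) : R[X] := X ^ 3 + C α * X - C β

theorem monic_depressedCubic (α β : R) : (depressedCubic α β).Monic := by
  unfold depressedCubic; monicity!

theorem natDegree_depressedCubic [Nontrivial R] (α β : R) :
    (depressedCubic α β).natDegree = 3 := by
  unfold depressedCubic; compute_degree!

theorem map_depressedCubic {S : Type*} [CommRing S] (f : R →+* S) (α β : R) :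
    (depressedCubic α β).map f = depressedCubic (f α) (f β) := by
  simp [depressedCubic]

theorem X_pow_add_three_modByMonic_depressedCubic (α β : R) (m : ℕ) :
    X ^ (m + 3) %ₘ depressedCubic α β =
      C β * (X ^ m %ₘ depressedCubic α β) - C α * (X ^ (m + 1) %ₘ depressedCubic α β) := by
  rw [← smul_eq_C_mul, ← smul_eq_C_mul, ← smul_modByMonic, ← smul_modByMonic, ← sub_modByMonic]
  refine modByMonic_eq_of_dvd_sub (monic_depressedCubic α β) ⟨X ^ m, ?_⟩
  simp only [depressedCubic, smul_eq_C_mul]; ring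

theorem coeff_two_X_pow_modByMonic_depressedCubic [Nontrivial R] (α β : R) {m : ℕ}
    (hm : m < 3) : (X ^ m %ₘ depressedCubic α β).coeff 2 = if m = 2 then 1 else 0 := by
  rw [(modByMonic_eq_self_iff (monic_depressedCubic α β)).mpr, coeff_X_pow]
  · simp [eq_comm]
  · rw [degree_X_pow, degree_eq_natDegree (monic_depressedCubic α β).ne_zero,
      natDegree_depressedCubic]
    exact_mod_cast hm

theorem intCast_useq_eq_coeff_modByMonic [Nontrivial R] (a0 b0 : ℤ) : ∀ n : ℕ,
    (useq a0 b0 (n + 1) : R) = (X ^ (n + 3) %ₘ depressedCubic (a0 : R) b0).coeff 2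
  | 0 => by
    rw [X_pow_add_three_modByMonic_depressedCubic, coeff_sub, coeff_C_mul, coeff_C_mul,
      coeff_two_X_pow_modByMonic_depressedCubic _ _ (m := 0) (by norm_num),
      coeff_two_X_pow_modByMonic_depressedCubic _ _ (m := 1) (by norm_num)]
    simp [useq]
  | 1 => by
    rw [X_pow_add_three_modByMonic_depressedCubic, coeff_sub, coeff_C_mul, coeff_C_mul,
      coeff_two_X_pow_modByMonic_depressedCubic _ _ (m := 1) (by norm_num),
      coeff_two_X_pow_modByMonic_depressedCubic _ _ (m := 2) (by norm_num)]
    simp [useq]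
  | 2 => by
    rw [X_pow_add_three_modByMonic_depressedCubic, coeff_sub, coeff_C_mul, coeff_C_mul,
      coeff_two_X_pow_modByMonic_depressedCubic _ _ (m := 2) (by norm_num),
      show 2 + 1 = 0 + 3 from rfl, ← intCast_useq_eq_coeff_modByMonic a0 b0 0]
    simp [useq]
  | n + 3 => by
    rw [X_pow_add_three_modByMonic_depressedCubic, coeff_sub, coeff_C_mul, coeff_C_mul,
      ← intCast_useq_eq_coeff_modByMonic a0 b0 n, ← intCast_useq_eq_coeff_modByMonic a0 b0 (n + 1)]
    simp [useq]

end DepressedCubic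

section Field

variable {K : Type*} [Field K]

theorem eq_X_sub_C_pow_natDegree_of_dvd {f : K[X]} (hf : f.Monic) {c : K} {m : ℕ}
    (h : f ∣ (X - C c) ^ m) : f = (X - C c) ^ f.natDegree := by
  obtain ⟨i, -, hi⟩ := (dvd_prime_pow (prime_X_sub_C c) m).mp h
  have hfi : f = (X - C c) ^ i := eq_of_monic_of_associated hf ((monic_X_sub_C c).pow i) hi
  rw [hfi, natDegree_pow, natDegree_X_sub_C, mul_one]

theorem depressedCubic_ne_X_sub_C_pow_three {α : K} (h3 : (3 : K) ≠ 0) (hα : α ≠ 0) (β c : K) :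
    depressedCubic α β ≠ (X - C c) ^ 3 := by
  intro h
  have h2 := congrArg (coeff · 2) h
  have h1 := congrArg (coeff · 1) h
  have hexp : (X - C c) ^ 3 = X ^ 3 - C (3 * c) * X ^ 2 + C (3 * c ^ 2) * X - C (c ^ 3) := by
    simp only [map_mul, map_pow, map_ofNat]; ring
  simp only [depressedCubic, hexp, coeff_add, coeff_sub, coeff_C_mul, coeff_X_pow, coeff_X,
    coeff_C] at h1 h2
  norm_num at h1 h2
  obtain rfl : c = 0 := h2.resolve_left h3
  simp [hα] at h1

theorem depressedCubic_comp_linear (α β c1 c0 : K) :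
    (depressedCubic α β).comp (C c1 * X + C c0) =
      C (c1 ^ 3) * X ^ 3 + C (3 * c1 ^ 2 * c0) * X ^ 2 + C (3 * c1 * c0 ^ 2 + α * c1) * X
        + C (c0 ^ 3 + α * c0 - β) := by
  simp only [depressedCubic, add_comp, sub_comp, mul_comp, pow_comp, X_comp, C_comp, map_mul,
    map_add, map_pow, map_sub, map_ofNat]
  ring

theorem eq_one_and_eq_zero_of_depressedCubic_dvd_comp {α β : K} (h3 : (3 : K) ≠ 0)
    (hα : α ≠ 0) (hβ : β ≠ 0) {c1 c0 : K} (hc1 : c1 ≠ 0)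
    (h : depressedCubic α β ∣ (depressedCubic α β).comp (C c1 * X + C c0)) :
    c1 = 1 ∧ c0 = 0 := by
  have hdeg : ((depressedCubic α β).comp (C c1 * X + C c0)).natDegree ≤
      (depressedCubic α β).natDegree := by
    rw [depressedCubic_comp_linear, natDegree_depressedCubic]; compute_degree
  obtain ⟨k, hk⟩ : ∃ k, (depressedCubic α β).comp (C c1 * X + C c0) = C k * depressedCubic α β :=
    ⟨_, eq_leadingCoeff_mul_of_monic_of_dvd_of_natDegree_le (monic_depressedCubic α β) h hdeg⟩
  rw [depressedCubic_comp_linear] at hk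
  have e3 := congrArg (coeff · 3) hk
  have e2 := congrArg (coeff · 2) hk
  have e1 := congrArg (coeff · 1) hk
  have e0 := congrArg (coeff · 0) hk
  simp only [depressedCubic, coeff_add, coeff_sub, coeff_C_mul, coeff_X_pow, coeff_X, coeff_C,
    mul_add, mul_sub] at e3 e2 e1 e0
  norm_num at e3 e2 e1 e0
  subst e3
  obtain rfl : c0 = 0 := by tauto
  have hcube : c1 ^ 3 = 1 := mul_right_cancel₀ hβ (by linear_combination e0)
  have hc1 : c1 = c1 ^ 3 := mul_left_cancel₀ hα (by linear_combination e1)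
  exact ⟨hc1.trans hcube, rfl⟩

end Field

namespace FiniteField

variable {K : Type*} [Field K] [Fintype K]

theorem dvd_comp_of_dvd_X_pow_card_sub {f L : K[X]} (h : f ∣ X ^ Fintype.card K - L) :
    f ∣ f.comp L := by
  have hfrob : f.comp (X ^ Fintype.card K) = f ^ Fintype.card K := by
    rw [← expand_eq_comp_X_pow, expand_card]
  have hsub : X ^ Fintype.card K - L ∣ f.comp (X ^ Fintype.card K) - f.comp L := by
    have := sub_dvd_eval_sub (X ^ Fintype.card K) L (f.map C)
    rwa [eval_map, eval_map] at this
  have := dvd_sub (dvd_pow_self f (Fintype.card_ne_zero (α := K))) (h.trans hsub)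
  rwa [hfrob, sub_sub_cancel] at this

theorem X_pow_card_sub_C_eq_pow (c : K) :
    (X ^ Fintype.card K - C c : K[X]) = (X - C c) ^ Fintype.card K := by
  rw [← expand_card (X - C c), map_sub, expand_X, expand_C]

theorem separable_X_pow_card_sub_X : (X ^ Fintype.card K - X : K[X]).Separable :=
  galois_poly_separable (ringChar K) _ ((ringChar.spec K _).mp (cast_card_eq_zero K))

theorem card_roots_toFinset_of_dvd_X_pow_card_sub_X [DecidableEq K] {f : K[X]}
    (h : f ∣ X ^ Fintype.card K - X) : f.roots.toFinset.card = f.natDegree := by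
  have hsplits : Splits (X ^ Fintype.card K - X : K[X]) := by
    rw [splits_iff_card_roots, roots_X_pow_card_sub_X,
      X_pow_card_sub_X_natDegree_eq K Fintype.one_lt_card]
    simp
  have hf : f.Splits := hsplits.of_dvd (X_pow_card_sub_X_ne_zero K Fintype.one_lt_card) h
  rw [Multiset.toFinset_card_of_nodup (nodup_roots (separable_X_pow_card_sub_X.of_dvd h)),
    hf.natDegree_eq_card_roots]

theorem depressedCubic_dvd_X_pow_card_sub_X {α β : K} (h3 : (3 : K) ≠ 0) (hα : α ≠ 0)
    (hβ : β ≠ 0) (h : (X ^ Fintype.card K %ₘ depressedCubic α β).coeff 2 = 0) :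
    depressedCubic α β ∣ X ^ Fintype.card K - X := by
  set r := X ^ Fintype.card K %ₘ depressedCubic α β
  have hr3 : r.natDegree < 3 := by
    have := natDegree_modByMonic_lt (X ^ Fintype.card K) (monic_depressedCubic α β)
      fun h1 => by simpa [h1] using natDegree_depressedCubic α β
    rwa [natDegree_depressedCubic] at this
  have hr1 : r.natDegree ≤ 1 := by
    refine natDegree_le_iff_coeff_eq_zero.mpr fun n hn => ?_
    rcases Nat.lt_or_ge n 3 with hn3 | hn3
    · obtain rfl : n = 2 := by omega
      exact h
    · exact coeff_eq_zero_of_natDegree_lt (by omega)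
  have hdvd : depressedCubic α β ∣ X ^ Fintype.card K - (C (r.coeff 1) * X + C (r.coeff 0)) := by
    rw [← eq_X_add_C_of_natDegree_le_one hr1, dvd_sub_comm]
    exact dvd_modByMonic_sub _ _
  rcases eq_or_ne (r.coeff 1) 0 with hc1 | hc1
  · rw [hc1, map_zero, zero_mul, zero_add, X_pow_card_sub_C_eq_pow] at hdvd
    have := eq_X_sub_C_pow_natDegree_of_dvd (monic_depressedCubic α β) hdvd
    rw [natDegree_depressedCubic] at this
    exact absurd this (depressedCubic_ne_X_sub_C_pow_three h3 hα β _)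
  · obtain ⟨h1, h0⟩ := eq_one_and_eq_zero_of_depressedCubic_dvd_comp h3 hα hβ hc1
      (dvd_comp_of_dvd_X_pow_card_sub hdvd)
    simpa [h1, h0] using hdvd

end FiniteField

theorem Padic.valuation_eq_zero_of_norm_eq_one {p : ℕ} [Fact p.Prime] {x : ℚ_[p]}
    (hx : ‖x‖ = 1) : x.valuation = 0 := by
  have hx0 : x ≠ 0 := norm_ne_zero_iff.mp (by rw [hx]; exact one_ne_zero)
  have hp1 : (p : ℝ) ≠ 1 := by exact_mod_cast (Fact.out : p.Prime).one_lt.ne'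
  rw [Padic.norm_eq_zpow_neg_valuation hx0, zpow_eq_one_iff_right₀ (by positivity) hp1] at hx
  exact neg_eq_zero.mp hx

namespace PadicInt

variable {p : ℕ} [Fact p.Prime]

theorem toZMod_eq_zero_iff {x : ℤ_[p]} : toZMod x = 0 ↔ ‖x‖ < 1 := by
  rw [← RingHom.mem_ker, ker_toZMod, IsLocalRing.mem_maximalIdeal, mem_nonunits]

theorem toZMod_ne_zero_iff {x : ℤ_[p]} : toZMod x ≠ 0 ↔ ‖x‖ = 1 := by
  rw [Ne, toZMod_eq_zero_iff, not_lt]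
  exact ⟨fun h => le_antisymm x.2 h, ge_of_eq⟩

theorem toZMod_eq_of_isFirstDigit {x : ℤ_[p]} (hx : ‖x‖ = 1) {x0 : ℤ}
    (h : isFirstDigit p x x0) : toZMod x = x0 := by
  obtain ⟨-, -, hlt⟩ := h
  rw [Padic.valuation_eq_zero_of_norm_eq_one hx, neg_zero, zpow_zero, mul_one] at hlt
  rw [← sub_eq_zero, ← map_intCast toZMod, ← map_sub, toZMod_eq_zero_iff]
  simpa [norm_def] using hlt

theorem exists_isRoot_toZMod_eq {F : ℤ_[p][X]} (hF : F.Monic) {r : ZMod p}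
    (hr : (F.map toZMod).IsRoot r) (hr' : (F.map toZMod).derivative.eval r ≠ 0) :
    ∃ z : ℤ_[p], F.IsRoot z ∧ toZMod z = r := by
  obtain ⟨z₀, rfl⟩ := ZMod.ringHom_surjective toZMod r
  have hmem : F.eval z₀ ∈ IsLocalRing.maximalIdeal ℤ_[p] := by
    rwa [← ker_toZMod, RingHom.mem_ker, ← eval₂_at_apply, ← eval_map]
  have hunit : IsUnit (F.derivative.eval z₀) := by
    rwa [isUnit_iff, ← toZMod_ne_zero_iff, ← eval₂_at_apply, ← eval_map, ← derivative_map]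
  obtain ⟨z, hz, hzz₀⟩ := HenselianRing.is_henselian F hF z₀ hmem (hunit.map _)
  rw [← ker_toZMod, RingHom.mem_ker, map_sub, sub_eq_zero] at hzz₀
  exact ⟨z, hz, hzz₀⟩

theorem ncard_unit_roots_eq_natDegree {F : ℤ_[p][X]} (hF : F.Monic)
    (hsplit : F.map toZMod ∣ X ^ p - X) (hF0 : ‖F.coeff 0‖ = 1) :
    {x : ℚ_[p] | ‖x‖ = 1 ∧ aeval x F = 0}.ncard = F.natDegree := by
  classical
  set S := {x : ℚ_[p] | ‖x‖ = 1 ∧ aeval x F = 0}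
  set R := (F.map toZMod).roots.toFinset
  have hsplit' : F.map toZMod ∣ X ^ Fintype.card (ZMod p) - X := by rwa [ZMod.card]
  have hroot : ∀ r ∈ R, (F.map toZMod).IsRoot r := fun r hr =>
    (mem_roots (hF.map _).ne_zero).mp (Multiset.mem_toFinset.mp hr)
  have hR0 : ∀ r ∈ R, r ≠ 0 := by
    rintro r hr rfl
    have h0 := (hroot 0 hr).eq_zero
    rw [← coeff_zero_eq_eval_zero, coeff_map] at h0
    exact toZMod_ne_zero_iff.mpr hF0 h0
  have hlift : ∀ r ∈ R, ∃ z : ℤ_[p], F.IsRoot z ∧ toZMod z = r := fun r hr =>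
    exists_isRoot_toZMod_eq hF (hroot r hr) ((FiniteField.separable_X_pow_card_sub_X.of_dvd
      hsplit').eval₂_derivative_ne_zero (RingHom.id _) (hroot r hr))
  choose! ℓ hℓroot hℓ using hlift
  have hℓS : (fun r => (ℓ r : ℚ_[p])) '' ↑R ⊆ S := by
    rintro _ ⟨r, hr, rfl⟩
    refine ⟨?_, ?_⟩
    · rw [← norm_def, ← toZMod_ne_zero_iff, hℓ r hr]
      exact hR0 r hr
    · change aeval (ℓ r : ℚ_[p]) F = 0
      rw [← algebraMap_apply, aeval_algebraMap_apply, coe_aeval_eq_eval, (hℓroot r hr).eq_zero,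
        map_zero]
  have hℓinj : Set.InjOn (fun r => (ℓ r : ℚ_[p])) ↑R := by
    intro r hr s hs hrs
    rw [← hℓ r hr, ← hℓ s hs, Subtype.coe_injective hrs]
  have hSroots : S ⊆ F.rootSet ℚ_[p] := fun x hx => mem_rootSet.mpr ⟨hF.ne_zero, hx.2⟩
  refine le_antisymm ((Set.ncard_le_ncard hSroots (rootSet_finite F ℚ_[p])).trans
    (ncard_rootSet_le F ℚ_[p])) ?_
  calc F.natDegree = R.card := by
        rw [FiniteField.card_roots_toFinset_of_dvd_X_pow_card_sub_X hsplit', hF.natDegree_map]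
    _ = ((fun r => (ℓ r : ℚ_[p])) '' ↑R).ncard := by
        rw [hℓinj.ncard_image, Set.ncard_coe_finset]
    _ ≤ S.ncard := Set.ncard_le_ncard hℓS ((rootSet_finite F ℚ_[p]).subset hSroots)

end PadicInt

theorem cubic_three_unit_solutions_of_unit_discriminant_general (p : ℕ) [Fact p.Prime]
    (hp : 3 < p) (a b : ℚ_[p])
    (ha1 : ‖a‖ = 1) (hb1 : ‖b‖ = 1)
    (a0 b0 : ℤ) (ha0 : isFirstDigit p a a0) (hb0 : isFirstDigit p b b0)
    (hu : Int.ModEq (p : ℤ) (useq a0 b0 (p - 2)) 0) :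
    {x : ℚ_[p] | ‖x‖ = 1 ∧ x ^ 3 + a * x = b}.ncard = 3 := by
  obtain ⟨A, rfl⟩ : ∃ A : ℤ_[p], (A : ℚ_[p]) = a := ⟨⟨a, ha1.le⟩, rfl⟩
  obtain ⟨B, rfl⟩ : ∃ B : ℤ_[p], (B : ℚ_[p]) = b := ⟨⟨b, hb1.le⟩, rfl⟩
  rw [← PadicInt.norm_def] at ha1 hb1
  have hA : PadicInt.toZMod A = a0 := PadicInt.toZMod_eq_of_isFirstDigit ha1 ha0
  have hB : PadicInt.toZMod B = b0 := PadicInt.toZMod_eq_of_isFirstDigit hb1 hb0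
  have h3 : (3 : ZMod p) ≠ 0 := by
    rw [Ne, ← Nat.cast_ofNat, ZMod.natCast_eq_zero_iff]
    exact Nat.not_dvd_of_pos_of_lt (by norm_num) hp
  have hcoeff : (X ^ Fintype.card (ZMod p) %ₘ depressedCubic (a0 : ZMod p) b0).coeff 2 = 0 := by
    rw [ZMod.card, show (X : (ZMod p)[X]) ^ p = X ^ (p - 3 + 3) by rw [Nat.sub_add_cancel hp.le],
      ← intCast_useq_eq_coeff_modByMonic, show p - 3 + 1 = p - 2 by omega]
    simpa using (ZMod.intCast_eq_intCast_iff _ _ p).mpr hu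
  have hdvd := FiniteField.depressedCubic_dvd_X_pow_card_sub_X h3
    (hA ▸ PadicInt.toZMod_ne_zero_iff.mpr ha1) (hB ▸ PadicInt.toZMod_ne_zero_iff.mpr hb1) hcoeff
  rw [ZMod.card, ← hA, ← hB, ← map_depressedCubic] at hdvd
  have hcount := PadicInt.ncard_unit_roots_eq_natDegree (monic_depressedCubic A B) hdvd
    (by simpa [depressedCubic] using hb1)
  rw [natDegree_depressedCubic] at hcount
  convert hcount using 3 with x
  simp [depressedCubic, sub_eq_zero]

theorem cubic_three_unit_solutions_of_unit_discriminant (p : ℕ) [Fact p.Prime]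
    (hp : 3 < p) (a b : ℚ_[p]) (ha : a ≠ 0) (hb : b ≠ 0)
    (ha1 : ‖a‖ = 1) (hb1 : ‖b‖ = 1)
    (hD : ‖-4 * a ^ 3 - 27 * b ^ 2‖ = 1)
    (a0 b0 : ℤ) (ha0 : isFirstDigit p a a0) (hb0 : isFirstDigit p b b0)
    (hu : Int.ModEq (p : ℤ) (useq a0 b0 (p - 2)) 0) :
    {x : ℚ_[p] | ‖x‖ = 1 ∧ x ^ 3 + a * x = b}.ncard = 3 :=
  cubic_three_unit_solutions_of_unit_discriminant_general p hp a b ha1 hb1 a0 b0 ha0 hb0 hu
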